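/- arXiv:2005.01656 — 2 statements merged into one kernel-verified Lean document; each statement's English description precedes it below -/
import Mathlib

section
/- Let K ≥ 1, δ ∈ (0,1), p ≥ 1 a natural number, and set β(p,δ) = √( (2/p) (K·log 2 + log(1/δ)) ). Let μ^m, μ^n, μ̂^m, μ̂^n : Fin K → ℝ be vectors such that for all x ∈ ℝ^K, |⟨x, μ̂^m − μ^m⟩| ≤ ‖x‖₂ β(p,δ) and |⟨x, μ̂^n − μ^n⟩| ≤ ‖x‖₂ β(p,δ). Suppose there exist x₀, y₀ in the simplex Δ(K) with g := ⟨x₀, μ^m⟩ − ⟨y₀, μ^n⟩ > 0, and that p > 8 (K·log 2 + log(1/δ)) · ((‖x₀‖₂ + ‖y₀‖₂)/g)². Then there exist x, y ∈ Δ(K) such that ⟨x, μ̂^m⟩ − ‖x‖₂ β(p,δ) > ⟨y, μ̂^n⟩ + ‖y‖₂ β(p,δ), i.e., the statistical test of CatSE eliminating category n by category m under strong dominance succeeds at round p. -/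
open scoped BigOperators

/-- The simplex Δ(K) in ℝ^K. -/
def simplex (K : ℕ) : Set (EuclideanSpace ℝ (Fin K)) :=
  {x | (∀ k, 0 ≤ x k) ∧ ∑ k, x k = 1}

/-!
The pair `x₀, y₀` itself passes the test. The confidence bounds move `⟨x₀, μᵐ⟩` down and
`⟨y₀, μⁿ⟩` up by at most `‖x₀‖ β` and `‖y₀‖ β`, and the lower bound on `p` is exactly what makes
the total width `2 (‖x₀‖ + ‖y₀‖) β` smaller than the gap `g`.
-/

lemma two_mul_mul_sqrt_lt {s g c p : ℝ} (hs : 0 ≤ s) (hg : 0 < g) (hp : 0 ≤ p)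
    (h : 8 * c * (s / g) ^ 2 < p) : 2 * s * √(2 / p * c) < g := by
  rcases hp.eq_or_lt with rfl | hp
  · simpa using hg
  rw [← Real.sqrt_sq (by positivity : 0 ≤ 2 * s), ← Real.sqrt_mul (by positivity),
    Real.sqrt_lt' hg]
  calc (2 * s) ^ 2 * (2 / p * c) = 8 * c * (s / g) ^ 2 * g ^ 2 / p := by
        field_simp
        ring
    _ < p * g ^ 2 / p := by gcongr
    _ = g ^ 2 := by field_simp

theorem catSE_strong_dominance_test_succeeds_general
    (K : ℕ) (δ : ℝ) (p : ℕ)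
    (β : ℝ) (hβ : β = Real.sqrt ((2 / (p : ℝ)) * (K * Real.log 2 + Real.log (1 / δ))))
    (μm μn em en : EuclideanSpace ℝ (Fin K))
    (hm : ∀ x : EuclideanSpace ℝ (Fin K), |(inner ℝ x (em - μm) : ℝ)| ≤ ‖x‖ * β)
    (hn : ∀ x : EuclideanSpace ℝ (Fin K), |(inner ℝ x (en - μn) : ℝ)| ≤ ‖x‖ * β)
    (x₀ y₀ : EuclideanSpace ℝ (Fin K)) (hx₀ : x₀ ∈ simplex K) (hy₀ : y₀ ∈ simplex K)
    (hg : (inner ℝ x₀ μm : ℝ) - (inner ℝ y₀ μn : ℝ) > 0)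
    (hplarge : (p : ℝ) > 8 * (K * Real.log 2 + Real.log (1 / δ)) *
        ((‖x₀‖ + ‖y₀‖) / ((inner ℝ x₀ μm : ℝ) - (inner ℝ y₀ μn : ℝ))) ^ 2) :
    ∃ x ∈ simplex K, ∃ y ∈ simplex K,
      (inner ℝ x em : ℝ) - ‖x‖ * β > (inner ℝ y en : ℝ) + ‖y‖ * β := by
  refine ⟨x₀, hx₀, y₀, hy₀, ?_⟩
  have hwidth : 2 * (‖x₀‖ + ‖y₀‖) * β < (inner ℝ x₀ μm : ℝ) - (inner ℝ y₀ μn : ℝ) :=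
    hβ ▸ two_mul_mul_sqrt_lt (by positivity) hg p.cast_nonneg hplarge
  have hx := abs_le.mp (hm x₀)
  have hy := abs_le.mp (hn y₀)
  rw [inner_sub_right] at hx hy
  linarith [hx.1, hy.2]

/-- If category `m` beats category `n` in the sense that `⟨x₀, μᵐ⟩ - ⟨y₀, μⁿ⟩ = g > 0` for some
`x₀, y₀` in the simplex, and the empirical means are within the confidence region of radius
`β(p, δ)`, then the CatSE elimination test (strong dominance) succeeds as soon as
`p > 8 (K log 2 + log(1/δ)) ((‖x₀‖ + ‖y₀‖)/g)²`. -/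
theorem catSE_strong_dominance_test_succeeds
    (K : ℕ) (hK : 1 ≤ K) (δ : ℝ) (hδ : δ ∈ Set.Ioo (0 : ℝ) 1) (p : ℕ) (hp : 1 ≤ p)
    (β : ℝ) (hβ : β = Real.sqrt ((2 / (p : ℝ)) * (K * Real.log 2 + Real.log (1 / δ))))
    (μm μn em en : EuclideanSpace ℝ (Fin K))
    (hm : ∀ x : EuclideanSpace ℝ (Fin K), |(inner ℝ x (em - μm) : ℝ)| ≤ ‖x‖ * β)
    (hn : ∀ x : EuclideanSpace ℝ (Fin K), |(inner ℝ x (en - μn) : ℝ)| ≤ ‖x‖ * β)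
    (x₀ y₀ : EuclideanSpace ℝ (Fin K)) (hx₀ : x₀ ∈ simplex K) (hy₀ : y₀ ∈ simplex K)
    (hg : (inner ℝ x₀ μm : ℝ) - (inner ℝ y₀ μn : ℝ) > 0)
    (hplarge : (p : ℝ) > 8 * (K * Real.log 2 + Real.log (1 / δ)) *
        ((‖x₀‖ + ‖y₀‖) / ((inner ℝ x₀ μm : ℝ) - (inner ℝ y₀ μn : ℝ))) ^ 2) :
    ∃ x ∈ simplex K, ∃ y ∈ simplex K,
      (inner ℝ x em : ℝ) - ‖x‖ * β > (inner ℝ y en : ℝ) + ‖y‖ * β :=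
  catSE_strong_dominance_test_succeeds_general K δ p β hβ μm μn em en hm hn x₀ y₀ hx₀ hy₀ hg hplarge
end

section
/- Let K ≥ 1, δ ∈ (0,1), p ≥ 1 a natural number, and set β(p,δ) = √( (2/p) (K·log 2 + log(1/δ)) ). Let μ^m, μ^n, μ̂^m, μ̂^n : Fin K → ℝ be vectors such that for all x ∈ ℝ^K, |⟨x, μ̂^m − μ^m⟩| ≤ ‖x‖₂ β(p,δ) and |⟨x, μ̂^n − μ^n⟩| ≤ ‖x‖₂ β(p,δ). Suppose μ^m_k ≥ μ^n_k for all k ∈ Fin K, μ^m ≠ μ^n, and p > 32 (K·log 2 + log(1/δ)) / ‖μ^m − μ^n‖₂². Then there exists x in the simplex Δ(K) with x ≠ 0 such that ⟨x, μ̂^m − μ̂^n⟩ > 2 ‖x‖₂ β(p,δ), i.e., the statistical test of CatSE eliminating category n by category m under first-order dominance succeeds at round p. -/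
open scoped BigOperators

/-!
The gap `d = μᵐ - μⁿ` is a nonzero vector with nonnegative coordinates, so it normalizes to a
point of the simplex. Testing the confidence bounds against `d` gives
`⟨d, μ̂ᵐ - μ̂ⁿ⟩ ≥ ‖d‖² - 2 ‖d‖ β`, and the lower bound on `p` gives `‖d‖ > 4 β`, whence
`⟨d, μ̂ᵐ - μ̂ⁿ⟩ > 2 ‖d‖ β`. The test statistic is invariant under positive rescaling of `d`.
-/

lemma four_mul_sqrt_two_div_mul_lt {p L D : ℝ} (hp : 0 ≤ p) (hD : 0 < D)
    (h : p > 32 * L / D ^ 2) : 4 * Real.sqrt (2 / p * L) < D := by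
  rcases hp.eq_or_lt with rfl | hp
  · simpa using hD
  have hsq : 2 / p * L < (D / 4) ^ 2 := by
    rw [gt_iff_lt, div_lt_iff₀ (by positivity)] at h
    rw [div_mul_eq_mul_div, div_lt_iff₀ hp]
    linarith
  linarith [(Real.sqrt_lt' (by positivity)).mpr hsq]

section InnerProductSpace

variable {E : Type*} [NormedAddCommGroup E] [InnerProductSpace ℝ E]

lemma two_mul_norm_mul_lt_inner_of_confidence {μm μn em en : E} {β : ℝ} (hβ : 0 ≤ β)
    (hm : |(inner ℝ (μm - μn) (em - μm) : ℝ)| ≤ ‖μm - μn‖ * β)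
    (hn : |(inner ℝ (μm - μn) (en - μn) : ℝ)| ≤ ‖μm - μn‖ * β)
    (hgap : 4 * β < ‖μm - μn‖) :
    2 * ‖μm - μn‖ * β < (inner ℝ (μm - μn) (em - en) : ℝ) := by
  set d := μm - μn
  have hsplit : (inner ℝ d (em - en) : ℝ) =
      inner ℝ d (em - μm) - inner ℝ d (en - μn) + ‖d‖ ^ 2 := by
    rw [← real_inner_self_eq_norm_sq, ← inner_sub_right, ← inner_add_right]
    congr 1
    simp only [d]
    abel
  have hd_pos : 0 < ‖d‖ := by linarith
  rw [hsplit]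
  nlinarith [neg_abs_le (inner ℝ d (em - μm) : ℝ), le_abs_self (inner ℝ d (en - μn) : ℝ)]

lemma two_mul_norm_smul_mul_lt_inner_smul {x v : E} {β c : ℝ} (hc : 0 < c)
    (h : 2 * ‖x‖ * β < (inner ℝ x v : ℝ)) :
    2 * ‖c • x‖ * β < (inner ℝ (c • x) v : ℝ) := by
  rw [norm_smul, Real.norm_of_nonneg hc.le, real_inner_smul_left]
  nlinarith

end InnerProductSpace

lemma ne_zero_of_mem_simplex {K : ℕ} {x : EuclideanSpace ℝ (Fin K)} (hx : x ∈ simplex K) :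
    x ≠ 0 := by
  rintro rfl
  simpa using hx.2

lemma sum_pos_of_nonneg_of_ne_zero {K : ℕ} {d : EuclideanSpace ℝ (Fin K)}
    (hd : ∀ k, 0 ≤ d k) (hne : d ≠ 0) : 0 < ∑ k, d k := by
  obtain ⟨k, hk⟩ : ∃ k, d k ≠ 0 := by
    by_contra! h
    exact hne (by ext k; simp [h k])
  exact Finset.sum_pos' (fun k _ => hd k) ⟨k, Finset.mem_univ k, (hd k).lt_of_ne' hk⟩

lemma inv_sum_smul_mem_simplex {K : ℕ} {d : EuclideanSpace ℝ (Fin K)}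
    (hd : ∀ k, 0 ≤ d k) (hne : d ≠ 0) : (∑ k, d k)⁻¹ • d ∈ simplex K := by
  have hS := sum_pos_of_nonneg_of_ne_zero hd hne
  refine ⟨fun k => ?_, ?_⟩
  · simpa using mul_nonneg (inv_nonneg.mpr hS.le) (hd k)
  · simp only [PiLp.smul_apply, smul_eq_mul, ← Finset.mul_sum]
    exact inv_mul_cancel₀ hS.ne'

theorem catSE_first_order_dominance_test_succeeds_general
    (K : ℕ) (δ : ℝ) (p : ℕ)
    (β : ℝ) (hβ : β = Real.sqrt ((2 / (p : ℝ)) * (K * Real.log 2 + Real.log (1 / δ))))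
    (μm μn em en : EuclideanSpace ℝ (Fin K))
    (hm : ∀ x : EuclideanSpace ℝ (Fin K), |(inner ℝ x (em - μm) : ℝ)| ≤ ‖x‖ * β)
    (hn : ∀ x : EuclideanSpace ℝ (Fin K), |(inner ℝ x (en - μn) : ℝ)| ≤ ‖x‖ * β)
    (hdom : ∀ k, μm k ≥ μn k) (hne : μm ≠ μn)
    (hplarge : (p : ℝ) > 32 * (K * Real.log 2 + Real.log (1 / δ)) / ‖μm - μn‖ ^ 2) :
    ∃ x ∈ simplex K, x ≠ 0 ∧ (inner ℝ x (em - en) : ℝ) > 2 * ‖x‖ * β := by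
  have hd_nonneg : ∀ k, 0 ≤ (μm - μn) k := fun k => sub_nonneg.mpr (hdom k)
  have hd_ne : μm - μn ≠ 0 := sub_ne_zero.mpr hne
  have hgap : 4 * β < ‖μm - μn‖ :=
    hβ ▸ four_mul_sqrt_two_div_mul_lt p.cast_nonneg (norm_pos_iff.mpr hd_ne) hplarge
  have htest := two_mul_norm_mul_lt_inner_of_confidence (hβ ▸ Real.sqrt_nonneg _)
    (hm (μm - μn)) (hn (μm - μn)) hgap
  have hx := inv_sum_smul_mem_simplex hd_nonneg hd_ne
  exact ⟨_, hx, ne_zero_of_mem_simplex hx, two_mul_norm_smul_mul_lt_inner_smul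
    (inv_pos.mpr (sum_pos_of_nonneg_of_ne_zero hd_nonneg hd_ne)) htest⟩

/-- If category `m` first-order dominates category `n` (`μᵐ ≥ μⁿ` coordinatewise, `μᵐ ≠ μⁿ`),
and the empirical means are within the confidence region of radius `β(p, δ)`, then the CatSE
elimination test (first-order dominance) succeeds as soon as
`p > 32 (K log 2 + log(1/δ)) / ‖μᵐ - μⁿ‖₂²`. -/
theorem catSE_first_order_dominance_test_succeeds
    (K : ℕ) (hK : 1 ≤ K) (δ : ℝ) (hδ : δ ∈ Set.Ioo (0 : ℝ) 1) (p : ℕ) (hp : 1 ≤ p)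
    (β : ℝ) (hβ : β = Real.sqrt ((2 / (p : ℝ)) * (K * Real.log 2 + Real.log (1 / δ))))
    (μm μn em en : EuclideanSpace ℝ (Fin K))
    (hm : ∀ x : EuclideanSpace ℝ (Fin K), |(inner ℝ x (em - μm) : ℝ)| ≤ ‖x‖ * β)
    (hn : ∀ x : EuclideanSpace ℝ (Fin K), |(inner ℝ x (en - μn) : ℝ)| ≤ ‖x‖ * β)
    (hdom : ∀ k, μm k ≥ μn k) (hne : μm ≠ μn)
    (hplarge : (p : ℝ) > 32 * (K * Real.log 2 + Real.log (1 / δ)) / ‖μm - μn‖ ^ 2) :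
    ∃ x ∈ simplex K, x ≠ 0 ∧ (inner ℝ x (em - en) : ℝ) > 2 * ‖x‖ * β :=
  catSE_first_order_dominance_test_succeeds_general K δ p β hβ μm μn em en hm hn hdom hne hplarge
end
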